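/- Let (A,V,χ,F,ν) be a crossed product system with preunit and assume F is a cocycle satisfying the twisted module condition. Then χ(v⊗a) = μ_𝓔((1_A⊗v)⊗j'_ν(a)) and F(v⊗w) = μ_𝓔((1_A⊗v)⊗(1_A⊗w)) for all v,w ∈ V and a ∈ A. -/
import Mathlib


open TensorProduct

noncomputable section

namespace WeakCrossedProduct

variable {k : Type*} [Field k]
variable {A : Type*} [Ring A] [Algebra k A]
variable {V : Type*} [AddCommGroup V] [Module k V]

/-- The map `A ⊗ₖ (A ⊗ₖ V) → A ⊗ₖ V`, `a ⊗ x ↦ a • x`, i.e. `μ_A ⊗ id_V`. -/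
def actMap : A ⊗[k] (A ⊗[k] V) →ₗ[k] A ⊗[k] V :=
  TensorProduct.lift (LinearMap.mk₂ k (fun (a : A) (x : A ⊗[k] V) => a • x)
    (fun a b x => add_smul a b x)
    (fun c a x => smul_assoc c a x)
    (fun a x y => smul_add a x y)
    (fun c a x => smul_comm a c x))

/-- Given `g : V → A ⊗ V`, the map `A ⊗ V → A ⊗ V`, `a ⊗ u ↦ a • g u`. -/
def smulMap (g : V →ₗ[k] A ⊗[k] V) : A ⊗[k] V →ₗ[k] A ⊗[k] V :=
  TensorProduct.lift (LinearMap.mk₂ k (fun (a : A) (u : V) => a • g u)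
    (fun a b u => add_smul a b (g u))
    (fun c a u => smul_assoc c a (g u))
    (fun a u u' => show a • g (u + u') = a • g u + a • g u' by
      rw [map_add, smul_add])
    (fun c a u => show a • g (c • u) = c • (a • g u) by
      rw [map_smul]; exact smul_comm a c (g u)))

/-- The right action of `a' ∈ A` on `A ⊗ V`: `(a ⊗ v) · a' := a • χ (v ⊗ a')`. -/
def ract (χ : V ⊗[k] A →ₗ[k] A ⊗[k] V) (a' : A) : A ⊗[k] V →ₗ[k] A ⊗[k] V :=
  smulMap (χ ∘ₗ (TensorProduct.mk k V A).flip a')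

/-- `(A,V,χ)` is a twisted space:
`χ ∘ (id_V ⊗ μ_A) = (μ_A ⊗ id_V) ∘ (id_A ⊗ χ) ∘ (χ ⊗ id_A)` (stated on pure tensors). -/
def IsTwisting (χ : V ⊗[k] A →ₗ[k] A ⊗[k] V) : Prop :=
  ∀ (v : V) (a b : A), χ (v ⊗ₜ[k] (a * b)) = ract χ b (χ (v ⊗ₜ[k] a))

/-- `∇_χ(x) := x · 1_A`. -/
def nabla (χ : V ⊗[k] A →ₗ[k] A ⊗[k] V) : A ⊗[k] V →ₗ[k] A ⊗[k] V :=
  ract χ 1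

/-- `A × V := ∇_χ(A ⊗ V)`. -/
def AxV (χ : V ⊗[k] A →ₗ[k] A ⊗[k] V) : Submodule k (A ⊗[k] V) :=
  LinearMap.range (nabla χ)

/-- `X_χ := {x ∈ A ⊗ V : x · 1_A = 0}`. -/
def Xchi (χ : V ⊗[k] A →ₗ[k] A ⊗[k] V) : Submodule k (A ⊗[k] V) :=
  LinearMap.ker (nabla χ)

/-- `μ_𝓔 := (μ_A ⊗ id_V) ∘ (μ_A ⊗ F) ∘ (id_A ⊗ χ ⊗ id_V)`. -/
def muE (χ : V ⊗[k] A →ₗ[k] A ⊗[k] V) (F : V ⊗[k] V →ₗ[k] A ⊗[k] V) :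
    (A ⊗[k] V) ⊗[k] (A ⊗[k] V) →ₗ[k] A ⊗[k] V :=
  actMap ∘ₗ
  LinearMap.lTensor A (actMap) ∘ₗ
  LinearMap.lTensor A (LinearMap.lTensor A F ∘ₗ (TensorProduct.assoc k A V V).toLinearMap) ∘ₗ
  LinearMap.lTensor A (LinearMap.rTensor V χ) ∘ₗ
  LinearMap.lTensor A (TensorProduct.assoc k V A V).symm.toLinearMap ∘ₗ
  (TensorProduct.assoc k A V (A ⊗[k] V)).toLinearMap

/-- The twisted module condition (stated on pure tensors). -/
def TwistedModuleCond (χ : V ⊗[k] A →ₗ[k] A ⊗[k] V) (F : V ⊗[k] V →ₗ[k] A ⊗[k] V) : Prop :=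
  ∀ (v w : V) (a : A),
    ract χ a (F (v ⊗ₜ[k] w)) = muE χ F (((1 : A) ⊗ₜ[k] v) ⊗ₜ[k] χ (w ⊗ₜ[k] a))

/-- The cocycle condition (stated on pure tensors). -/
def CocycleCond (χ : V ⊗[k] A →ₗ[k] A ⊗[k] V) (F : V ⊗[k] V →ₗ[k] A ⊗[k] V) : Prop :=
  ∀ (v w u : V),
    smulMap (F ∘ₗ (TensorProduct.mk k V V).flip u) (F (v ⊗ₜ[k] w)) =
      muE χ F (((1 : A) ⊗ₜ[k] v) ⊗ₜ[k] F (w ⊗ₜ[k] u))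

/-- Preunit condition (i). -/
def Preunit1 (χ : V ⊗[k] A →ₗ[k] A ⊗[k] V) (F : V ⊗[k] V →ₗ[k] A ⊗[k] V)
    (ν : A ⊗[k] V) : Prop :=
  ∀ v : V, muE χ F (((1 : A) ⊗ₜ[k] v) ⊗ₜ[k] ν) = nabla χ ((1 : A) ⊗ₜ[k] v)

/-- Preunit condition (ii). -/
def Preunit2 (χ : V ⊗[k] A →ₗ[k] A ⊗[k] V) (F : V ⊗[k] V →ₗ[k] A ⊗[k] V)
    (ν : A ⊗[k] V) : Prop :=
  ∀ v : V, smulMap (F ∘ₗ (TensorProduct.mk k V V).flip v) ν = nabla χ ((1 : A) ⊗ₜ[k] v)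

/-- Preunit condition (iii). -/
def Preunit3 (χ : V ⊗[k] A →ₗ[k] A ⊗[k] V) (ν : A ⊗[k] V) : Prop :=
  ∀ a : A, ract χ a ν = a • ν

/-- `γ(v) := ∇_χ(1_A ⊗ v)`. -/
def gammaMap (χ : V ⊗[k] A →ₗ[k] A ⊗[k] V) : V → A ⊗[k] V :=
  fun v => nabla χ ((1 : A) ⊗ₜ[k] v)

/-- `j'_ν(a) := a · ν(1)`. -/
def jnu' (ν : A ⊗[k] V) : A → A ⊗[k] V := fun a => a • ν

/-- `j_ν(a) := ∇_χ(j'_ν(a))`. -/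
def jnu (χ : V ⊗[k] A →ₗ[k] A ⊗[k] V) (ν : A ⊗[k] V) : A → A ⊗[k] V :=
  fun a => nabla χ (a • ν)


section Aux

variable (χ : V ⊗[k] A →ₗ[k] A ⊗[k] V) (F : V ⊗[k] V →ₗ[k] A ⊗[k] V)

lemma smulMap_tmul (g : V →ₗ[k] A ⊗[k] V) (a : A) (u : V) :
    smulMap g (a ⊗ₜ[k] u) = a • g u := rfl

lemma actMap_tmul (a : A) (x : A ⊗[k] V) : actMap (a ⊗ₜ[k] x) = a • x := rfl

lemma smulMap_Asmul (g : V →ₗ[k] A ⊗[k] V) (a : A) (x : A ⊗[k] V) :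
    smulMap g (a • x) = a • smulMap g x := by
  induction x using TensorProduct.induction_on with
  | zero => simp
  | tmul b u =>
      rw [smul_tmul', smulMap_tmul, smulMap_tmul, smul_eq_mul, mul_smul]
  | add x y hx hy => rw [smul_add, map_add, map_add, hx, hy, smul_add]

lemma ract_tmul (a' b : A) (v : V) :
    ract χ a' (b ⊗ₜ[k] v) = b • χ (v ⊗ₜ[k] a') := rfl

lemma nabla_tmul (b : A) (v : V) : nabla χ (b ⊗ₜ[k] v) = b • χ (v ⊗ₜ[k] 1) := rfl

lemma muE_helper (w : V) (z : A ⊗[k] V) :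
    actMap (LinearMap.lTensor A F ((TensorProduct.assoc k A V V) (z ⊗ₜ[k] w))) =
      smulMap (F ∘ₗ (TensorProduct.mk k V V).flip w) z := by
  induction z using TensorProduct.induction_on with
  | zero => simp
  | tmul c v => rfl
  | add x y hx hy =>
      rw [add_tmul, map_add, map_add, map_add, map_add, hx, hy]

lemma muE_tmul (a : A) (v : V) (b : A) (w : V) :
    muE χ F ((a ⊗ₜ[k] v) ⊗ₜ[k] (b ⊗ₜ[k] w)) =
      a • smulMap (F ∘ₗ (TensorProduct.mk k V V).flip w) (χ (v ⊗ₜ[k] b)) := by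
  have : muE χ F ((a ⊗ₜ[k] v) ⊗ₜ[k] (b ⊗ₜ[k] w)) =
      actMap (a ⊗ₜ[k]
        actMap (LinearMap.lTensor A F
          ((TensorProduct.assoc k A V V) (χ (v ⊗ₜ[k] b) ⊗ₜ[k] w)))) := by
    simp [muE]
  rw [this, muE_helper, actMap_tmul]

lemma muE_tmul_right (c : A) (w : V) (z : A ⊗[k] V) :
    muE χ F (z ⊗ₜ[k] (c ⊗ₜ[k] w)) =
      smulMap (F ∘ₗ (TensorProduct.mk k V V).flip w) (ract χ c z) := by
  induction z using TensorProduct.induction_on with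
  | zero => simp
  | tmul b v => rw [muE_tmul, ract_tmul, smulMap_Asmul]
  | add x y hx hy => rw [add_tmul, map_add, map_add, map_add, hx, hy]

lemma muE_left_smul (b : A) (v : V) (y : A ⊗[k] V) :
    muE χ F ((b ⊗ₜ[k] v) ⊗ₜ[k] y) = b • muE χ F (((1:A) ⊗ₜ[k] v) ⊗ₜ[k] y) := by
  induction y using TensorProduct.induction_on with
  | zero => simp
  | tmul c w => rw [muE_tmul, muE_tmul, one_smul]
  | add x y hx hy => rw [tmul_add, tmul_add, map_add, map_add, hx, hy, smul_add]

lemma nabla_chi (hχ : IsTwisting χ) (v : V) (a : A) :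
    nabla χ (χ (v ⊗ₜ[k] a)) = χ (v ⊗ₜ[k] a) := by
  have h := hχ v a 1
  rw [mul_one] at h
  exact h.symm

lemma nabla_nabla (hχ : IsTwisting χ) (z : A ⊗[k] V) :
    nabla χ (nabla χ z) = nabla χ z := by
  induction z using TensorProduct.induction_on with
  | zero => simp
  | tmul b v =>
      rw [nabla_tmul]
      rw [show nabla χ (b • χ (v ⊗ₜ[k] 1)) = b • nabla χ (χ (v ⊗ₜ[k] 1)) from
        smulMap_Asmul _ _ _]
      rw [nabla_chi χ hχ]
  | add x y hx hy => rw [map_add, map_add, hx, hy]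

lemma muE_smul_exchange (hχ : IsTwisting χ) (v : V) (a : A) (y : A ⊗[k] V) :
    muE χ F (((1:A) ⊗ₜ[k] v) ⊗ₜ[k] (a • y)) = muE χ F ((χ (v ⊗ₜ[k] a)) ⊗ₜ[k] y) := by
  induction y using TensorProduct.induction_on with
  | zero => rw [smul_zero, tmul_zero, tmul_zero]
  | tmul c w =>
      rw [smul_tmul', smul_eq_mul, muE_tmul, one_smul, hχ v a c, muE_tmul_right]
  | add x y hx hy =>
      rw [smul_add, tmul_add, tmul_add, map_add, map_add, hx, hy]

lemma muE_nu (ν : A ⊗[k] V) (hν1 : Preunit1 χ F ν) (z : A ⊗[k] V) :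
    muE χ F (z ⊗ₜ[k] ν) = nabla χ z := by
  induction z using TensorProduct.induction_on with
  | zero => simp
  | tmul b v =>
      rw [muE_left_smul, hν1 v, nabla_tmul, nabla_tmul, one_smul]
  | add x y hx hy => rw [add_tmul, map_add, map_add, hx, hy]

lemma muE_F_right (hcoc : CocycleCond χ F) (u w : V) (z : A ⊗[k] V) :
    muE χ F (z ⊗ₜ[k] F (u ⊗ₜ[k] w)) =
      smulMap (F ∘ₗ (TensorProduct.mk k V V).flip w)
        (smulMap (F ∘ₗ (TensorProduct.mk k V V).flip u) z) := by
  induction z using TensorProduct.induction_on with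
  | zero => simp
  | tmul b v =>
      rw [muE_left_smul, ← hcoc v u w, smulMap_tmul, smulMap_Asmul]; rfl
  | add x y hx hy => rw [add_tmul, map_add, map_add, map_add, hx, hy]

lemma muE_smulMap_exchange (hχ : IsTwisting χ) (hcoc : CocycleCond χ F)
    (v w : V) (y : A ⊗[k] V) :
    muE χ F (((1:A) ⊗ₜ[k] v) ⊗ₜ[k] smulMap (F ∘ₗ (TensorProduct.mk k V V).flip w) y) =
      smulMap (F ∘ₗ (TensorProduct.mk k V V).flip w)
        (muE χ F (((1:A) ⊗ₜ[k] v) ⊗ₜ[k] y)) := by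
  induction y using TensorProduct.induction_on with
  | zero => simp
  | tmul n u =>
      rw [smulMap_tmul, muE_smul_exchange χ F hχ, muE_tmul, one_smul]
      exact muE_F_right χ F hcoc u w _
  | add x y hx hy =>
      rw [map_add, tmul_add, tmul_add, map_add, map_add, hx, hy, ← map_add]

end Aux

theorem statement_10 (χ : V ⊗[k] A →ₗ[k] A ⊗[k] V) (F : V ⊗[k] V →ₗ[k] A ⊗[k] V)
    (ν : A ⊗[k] V)
    (hχ : IsTwisting χ) (hF : ∀ x : V ⊗[k] V, F x ∈ AxV χ)
    (hν1 : Preunit1 χ F ν) (hν2 : Preunit2 χ F ν) (hν3 : Preunit3 χ ν)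
    (htm : TwistedModuleCond χ F) (hcoc : CocycleCond χ F) :
    (∀ (v : V) (a : A),
      χ (v ⊗ₜ[k] a) = muE χ F (((1 : A) ⊗ₜ[k] v) ⊗ₜ[k] jnu' ν a)) ∧
    (∀ v w : V,
      F (v ⊗ₜ[k] w) = muE χ F (((1 : A) ⊗ₜ[k] v) ⊗ₜ[k] ((1 : A) ⊗ₜ[k] w))) := by
  constructor
  · intro v a
    show χ (v ⊗ₜ[k] a) = muE χ F (((1:A) ⊗ₜ[k] v) ⊗ₜ[k] (a • ν))
    rw [muE_smul_exchange χ F hχ, muE_nu χ F ν hν1, nabla_chi χ hχ]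
  · intro v w
    obtain ⟨x, hx⟩ := hF (v ⊗ₜ[k] w)
    have h0 : nabla χ (F (v ⊗ₜ[k] w)) = F (v ⊗ₜ[k] w) := by
      rw [← hx, nabla_nabla χ hχ]
    have h1 : F (v ⊗ₜ[k] w) = muE χ F (((1:A) ⊗ₜ[k] v) ⊗ₜ[k] χ (w ⊗ₜ[k] 1)) := by
      rw [← htm v w 1]; exact h0.symm
    have h2 : χ (w ⊗ₜ[k] (1:A)) =
        smulMap (F ∘ₗ (TensorProduct.mk k V V).flip w) ν := by
      rw [hν2 w, nabla_tmul, one_smul]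
    rw [h1, h2, muE_smulMap_exchange χ F hχ hcoc, hν1 v, nabla_tmul, one_smul,
      muE_tmul, one_smul]

end WeakCrossedProduct
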